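/- The elements e1^l, e2^l, e3^l and z are central in U_q^+(B_2), i.e., each of them commutes with each of the generators e1, e2, e3 and z. -/

import Mathlib

noncomputable section

open MulOpposite

/-- The defining relations of `U_q^+(B_2)` on the free algebra on generators
`e1 = ι 0`, `e2 = ι 1`, `e3 = ι 2`, `z = ι 3`. -/
inductive UqB2Rel (K : Type*) [Field K] (q : K) :
    FreeAlgebra K (Fin 4) → FreeAlgebra K (Fin 4) → Prop
  | e1z : UqB2Rel K q (FreeAlgebra.ι K 0 * FreeAlgebra.ι K 3)
      (FreeAlgebra.ι K 3 * FreeAlgebra.ι K 0)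
  | e2z : UqB2Rel K q (FreeAlgebra.ι K 1 * FreeAlgebra.ι K 3)
      (FreeAlgebra.ι K 3 * FreeAlgebra.ι K 1)
  | e3z : UqB2Rel K q (FreeAlgebra.ι K 2 * FreeAlgebra.ι K 3)
      (FreeAlgebra.ι K 3 * FreeAlgebra.ι K 2)
  | e1e3 : UqB2Rel K q (FreeAlgebra.ι K 0 * FreeAlgebra.ι K 2)
      (q⁻¹ ^ 2 • (FreeAlgebra.ι K 2 * FreeAlgebra.ι K 0))
  | e2e3 : UqB2Rel K q (FreeAlgebra.ι K 1 * FreeAlgebra.ι K 2)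
      (q ^ 2 • (FreeAlgebra.ι K 2 * FreeAlgebra.ι K 1) + FreeAlgebra.ι K 3)
  | e2e1 : UqB2Rel K q (FreeAlgebra.ι K 1 * FreeAlgebra.ι K 0)
      (q⁻¹ ^ 2 • (FreeAlgebra.ι K 0 * FreeAlgebra.ι K 1) - q⁻¹ ^ 2 • FreeAlgebra.ι K 2)

/-- `U_q^+(B_2)`, presented by generators `e1, e2, e3, z` and the relations above. -/
abbrev UqB2 (K : Type*) [Field K] (q : K) : Type _ := RingQuot (UqB2Rel K q)

variable (K : Type*) [Field K] (q : K)

/-- The generator `e1` of `U_q^+(B_2)`. -/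
def Ue1 : UqB2 K q := RingQuot.mkAlgHom K (UqB2Rel K q) (FreeAlgebra.ι K 0)
/-- The generator `e2` of `U_q^+(B_2)`. -/
def Ue2 : UqB2 K q := RingQuot.mkAlgHom K (UqB2Rel K q) (FreeAlgebra.ι K 1)
/-- The generator `e3` of `U_q^+(B_2)`. -/
def Ue3 : UqB2 K q := RingQuot.mkAlgHom K (UqB2Rel K q) (FreeAlgebra.ι K 2)
/-- The generator `z` of `U_q^+(B_2)`. -/
def Uz : UqB2 K q := RingQuot.mkAlgHom K (UqB2Rel K q) (FreeAlgebra.ι K 3)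

/-!
For `b` in an algebra, right and left multiplication `R`, `L` by `b` commute, and
`qCommutator t b = R - t L`. Over a domain `R ^ n - L ^ n = ∏_{ζ ^ n = 1} (R - ζ L)`, and
`(R ^ n - L ^ n) a = a * b ^ n - b ^ n * a`; so an element `a` killed by `∏ (R - t L)` for some
distinct `n`-th roots of unity `t` commutes with `b ^ n`. In `U_q^+(B_2)` each generator is killed
in this way by the `q`-commutators with each other generator, with `t ∈ {1, q ^ 2, q⁻¹ ^ 2}`: for
instance `e1 e2 - q^2 e2 e1 = e3`, `e3 e2 - q^-2 e2 e3 = -q^-2 z` and `z e2 - e2 z = 0`. Since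
`q ^ 2` is a primitive `l`-th root of unity with `l ≥ 3`, these three values of `t` are distinct.
-/

open Polynomial

section QCommutator

variable {F A : Type*} [CommRing F] [Ring A] [Algebra F A]

def qCommutator (t : F) (b : A) : Module.End F A :=
  LinearMap.mulRight F b - t • LinearMap.mulLeft F b

@[simp]
theorem qCommutator_apply (t : F) (b x : A) : qCommutator t b x = x * b - t • (b * x) := by
  simp [qCommutator]

/-- Substitutes right multiplication by `b` for the outer variable and left multiplication by `b`
for the inner one. -/
def evalMulRightMulLeft (b : A) : F[X][X] →ₐ[F] Module.End F A :=
  eval₂AlgHom (aeval (LinearMap.mulLeft F b)) (LinearMap.mulRight F b) fun _ =>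
    (Algebra.commute_of_mem_adjoin_singleton_of_commute (aeval_mem_adjoin_singleton F _)
      (LinearMap.commute_mulLeft_right b b).symm).symm

theorem evalMulRightMulLeft_X (b : A) :
    evalMulRightMulLeft b (X : F[X][X]) = LinearMap.mulRight F b :=
  eval₂_X _ _

theorem evalMulRightMulLeft_C (b : A) (p : F[X]) :
    evalMulRightMulLeft b (C p) = aeval (LinearMap.mulLeft F b) p :=
  eval₂_C _ _

theorem evalMulRightMulLeft_X_sub_C (b : A) (t : F) :
    evalMulRightMulLeft b (X - C (C t * X)) = qCommutator t b := by
  rw [map_sub, evalMulRightMulLeft_X, evalMulRightMulLeft_C]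
  simp [qCommutator, Algebra.smul_def]

theorem evalMulRightMulLeft_X_pow_sub_C_X_pow_apply (b a : A) (n : ℕ) :
    evalMulRightMulLeft b (X ^ n - C (X ^ n) : F[X][X]) a = a * b ^ n - b ^ n * a := by
  rw [map_sub, map_pow, evalMulRightMulLeft_X, evalMulRightMulLeft_C]
  simp [LinearMap.pow_mulRight, LinearMap.pow_mulLeft]

theorem prod_X_sub_C_dvd_X_pow_sub_C_X_pow [IsDomain F] {ts : List F} {n : ℕ} (hts : ts.Nodup)
    (hroots : ∀ t ∈ ts, t ^ n = 1) :
    (ts.map fun t => X - C (C t * X)).prod ∣ (X ^ n - C (X ^ n) : F[X][X]) := by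
  rcases Nat.eq_zero_or_pos n with rfl | hn
  · simp
  have hne : (X ^ n - C (X ^ n) : F[X][X]) ≠ 0 := (monic_X_pow_sub_C _ hn.ne').ne_zero
  have hdvd := (Multiset.prod_X_sub_C_dvd_iff_le_roots hne (ts.map fun t => C t * X : List F[X])).2
  simp only [Multiset.map_coe, Multiset.prod_coe, List.map_map] at hdvd
  refine hdvd ((Multiset.le_iff_subset ?_).2 fun r hr => ?_)
  · exact Multiset.coe_nodup.2 (hts.map fun s t h => C_injective (mul_right_cancel₀ X_ne_zero h))
  · obtain ⟨t, ht, rfl⟩ := List.mem_map.1 (Multiset.mem_coe.1 hr)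
    rw [mem_roots hne, IsRoot, eval_sub, eval_pow, eval_X, eval_C, mul_pow, ← C_pow, hroots t ht,
      C_1, one_mul, sub_self]

theorem commute_pow_of_prod_qCommutator_eq_zero [IsDomain F] {a b : A} {ts : List F} {n : ℕ}
    (hts : ts.Nodup) (hroots : ∀ t ∈ ts, t ^ n = 1) (h : (ts.map (qCommutator · b)).prod a = 0) :
    Commute a (b ^ n) := by
  obtain ⟨Q, hQ⟩ := prod_X_sub_C_dvd_X_pow_sub_C_X_pow hts hroots
  have hfactor := congr(evalMulRightMulLeft b $hQ a)
  rw [evalMulRightMulLeft_X_pow_sub_C_X_pow_apply, mul_comm, map_mul, Module.End.mul_apply,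
    map_list_prod, List.map_map] at hfactor
  simp only [Function.comp_def, evalMulRightMulLeft_X_sub_C] at hfactor
  rw [h, map_zero] at hfactor
  exact sub_eq_zero.1 hfactor

theorem qCommutator_one_apply_eq_zero {a b : A} (h : Commute a b) :
    qCommutator (1 : F) b a = 0 := by
  rw [qCommutator_apply, one_smul, h.eq, sub_self]

end QCommutator

theorem IsPrimitiveRoot.inv_ne_self {F : Type*} [Field F] {ζ : F} {l : ℕ}
    (h : IsPrimitiveRoot ζ l) (hl : 3 ≤ l) : ζ⁻¹ ≠ ζ := by
  intro hinv
  have hsq : ζ ^ 2 = 1 := by rw [sq, ← inv_mul_cancel₀ (h.ne_zero (by omega)), hinv]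
  have := Nat.le_of_dvd two_pos ((h.pow_eq_one_iff_dvd 2).1 hsq)
  omega

theorem isPrimitiveRoot_sq {M : Type*} [CommMonoid M] {q : M} {m l : ℕ} (hq : IsPrimitiveRoot q m)
    (hm : 0 < m) (hl : l = if Odd m then m else m / 2) : IsPrimitiveRoot (q ^ 2) l := by
  split_ifs at hl with hodd
  · exact hl ▸ hq.pow_of_coprime 2 (Nat.coprime_two_left.2 hodd)
  · obtain ⟨k, rfl⟩ := Nat.not_odd_iff_even.1 hodd
    exact hq.pow hm (by omega)

section UqB2

theorem commute_Ue1_Uz : Commute (Ue1 K q) (Uz K q) := by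
  show Ue1 K q * Uz K q = Uz K q * Ue1 K q
  simpa only [map_mul, Ue1, Uz] using RingQuot.mkAlgHom_rel K (UqB2Rel.e1z (K := K) (q := q))

theorem commute_Ue2_Uz : Commute (Ue2 K q) (Uz K q) := by
  show Ue2 K q * Uz K q = Uz K q * Ue2 K q
  simpa only [map_mul, Ue2, Uz] using RingQuot.mkAlgHom_rel K (UqB2Rel.e2z (K := K) (q := q))

theorem commute_Ue3_Uz : Commute (Ue3 K q) (Uz K q) := by
  show Ue3 K q * Uz K q = Uz K q * Ue3 K q
  simpa only [map_mul, Ue3, Uz] using RingQuot.mkAlgHom_rel K (UqB2Rel.e3z (K := K) (q := q))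

theorem Ue1_mul_Ue3 : Ue1 K q * Ue3 K q = q⁻¹ ^ 2 • (Ue3 K q * Ue1 K q) := by
  simpa only [map_mul, map_smul, Ue1, Ue3] using
    RingQuot.mkAlgHom_rel K (UqB2Rel.e1e3 (K := K) (q := q))

theorem Ue2_mul_Ue3 : Ue2 K q * Ue3 K q = q ^ 2 • (Ue3 K q * Ue2 K q) + Uz K q := by
  simpa only [map_mul, map_smul, map_add, Ue2, Ue3, Uz] using
    RingQuot.mkAlgHom_rel K (UqB2Rel.e2e3 (K := K) (q := q))

theorem Ue2_mul_Ue1 :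
    Ue2 K q * Ue1 K q = q⁻¹ ^ 2 • (Ue1 K q * Ue2 K q) - q⁻¹ ^ 2 • Ue3 K q := by
  simpa only [map_mul, map_smul, map_sub, Ue1, Ue2, Ue3] using
    RingQuot.mkAlgHom_rel K (UqB2Rel.e2e1 (K := K) (q := q))

theorem qCommutator_Ue3_Ue1 : qCommutator (q⁻¹ ^ 2) (Ue3 K q) (Ue1 K q) = 0 := by
  rw [qCommutator_apply, Ue1_mul_Ue3, sub_self]

theorem qCommutator_Ue3_Ue2 : qCommutator (q ^ 2) (Ue3 K q) (Ue2 K q) = Uz K q := by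
  rw [qCommutator_apply, Ue2_mul_Ue3, add_sub_cancel_left]

theorem qCommutator_Ue1_Ue2 :
    qCommutator (q⁻¹ ^ 2) (Ue1 K q) (Ue2 K q) = -(q⁻¹ ^ 2 • Ue3 K q) := by
  rw [qCommutator_apply, Ue2_mul_Ue1, sub_sub_cancel_left]

variable {K q}

theorem qCommutator_Ue1_Ue3 (hq : q ≠ 0) : qCommutator (q ^ 2) (Ue1 K q) (Ue3 K q) = 0 := by
  rw [qCommutator_apply, Ue1_mul_Ue3, smul_smul, ← mul_pow, mul_inv_cancel₀ hq, one_pow, one_smul,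
    sub_self]

theorem qCommutator_Ue2_Ue3 (hq : q ≠ 0) :
    qCommutator (q⁻¹ ^ 2) (Ue2 K q) (Ue3 K q) = -(q⁻¹ ^ 2 • Uz K q) := by
  rw [qCommutator_apply, Ue2_mul_Ue3, smul_add, smul_smul, ← mul_pow, inv_mul_cancel₀ hq, one_pow,
    one_smul, sub_add_cancel_left]

theorem qCommutator_Ue2_Ue1 (hq : q ≠ 0) : qCommutator (q ^ 2) (Ue2 K q) (Ue1 K q) = Ue3 K q := by
  rw [qCommutator_apply, Ue2_mul_Ue1, smul_sub, smul_smul, smul_smul, ← mul_pow,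
    mul_inv_cancel₀ hq, one_pow, one_smul, one_smul, sub_sub_cancel]

variable {l : ℕ}

theorem commute_Ue1_Ue3_pow (h : (q ^ 2) ^ l = 1) : Commute (Ue1 K q) (Ue3 K q ^ l) :=
  commute_pow_of_prod_qCommutator_eq_zero (ts := [q⁻¹ ^ 2]) (List.nodup_singleton _)
    (by simp [h]) (by simp only [List.map, List.prod_cons, List.prod_nil,
      mul_one, qCommutator_Ue3_Ue1])

theorem commute_Ue3_Ue1_pow (hq : q ≠ 0) (h : (q ^ 2) ^ l = 1) :
    Commute (Ue3 K q) (Ue1 K q ^ l) :=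
  commute_pow_of_prod_qCommutator_eq_zero (ts := [q ^ 2]) (List.nodup_singleton _)
    (by simp [h]) (by simp only [List.map, List.prod_cons, List.prod_nil,
      mul_one, qCommutator_Ue1_Ue3 hq])

theorem commute_Ue2_Ue3_pow (hu : IsPrimitiveRoot (q ^ 2) l) (hl : 2 ≤ l) :
    Commute (Ue2 K q) (Ue3 K q ^ l) :=
  commute_pow_of_prod_qCommutator_eq_zero (ts := [1, q ^ 2])
    (by simpa using (hu.ne_one (by omega)).symm) (by simp [hu.pow_eq_one])
    (by simp only [List.map, List.prod_cons, List.prod_nil, mul_one,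
      Module.End.mul_apply, qCommutator_Ue3_Ue2,
      qCommutator_one_apply_eq_zero (commute_Ue3_Uz K q).symm])

theorem commute_Ue3_Ue2_pow (hu : IsPrimitiveRoot (q ^ 2) l) (hl : 2 ≤ l) :
    Commute (Ue3 K q) (Ue2 K q ^ l) := by
  have hq : q ≠ 0 := ne_zero_pow two_ne_zero (hu.ne_zero (by omega))
  refine commute_pow_of_prod_qCommutator_eq_zero (ts := [1, q⁻¹ ^ 2])
    (by simp [hu.ne_one (by omega), -sq_eq_one_iff]) (by simp [hu.pow_eq_one]) ?_
  simp only [List.map, List.prod_cons, List.prod_nil, mul_one,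
    Module.End.mul_apply, qCommutator_Ue2_Ue3 hq, map_neg, map_smul,
    qCommutator_one_apply_eq_zero (commute_Ue2_Uz K q).symm, smul_zero, neg_zero]

theorem commute_Ue2_Ue1_pow (hu : IsPrimitiveRoot (q ^ 2) l) (hl : 3 ≤ l) :
    Commute (Ue2 K q) (Ue1 K q ^ l) := by
  have hq : q ≠ 0 := ne_zero_pow two_ne_zero (hu.ne_zero (by omega))
  refine commute_pow_of_prod_qCommutator_eq_zero (ts := [q ^ 2, q⁻¹ ^ 2])
    (by simp [(hu.inv_ne_self hl).symm]) (by simp [hu.pow_eq_one]) ?_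
  simp only [List.map, List.prod_cons, List.prod_nil, mul_one,
    Module.End.mul_apply, qCommutator_Ue1_Ue2, map_neg, map_smul, qCommutator_Ue1_Ue3 hq,
    smul_zero, neg_zero]

theorem commute_Ue1_Ue2_pow (hu : IsPrimitiveRoot (q ^ 2) l) (hl : 3 ≤ l) :
    Commute (Ue1 K q) (Ue2 K q ^ l) := by
  have hq : q ≠ 0 := ne_zero_pow two_ne_zero (hu.ne_zero (by omega))
  have h1 : q ^ 2 ≠ 1 := hu.ne_one (by omega)
  refine commute_pow_of_prod_qCommutator_eq_zero (ts := [1, q⁻¹ ^ 2, q ^ 2])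
    (by simp [h1, h1.symm, hu.inv_ne_self hl, -sq_eq_one_iff]) (by simp [hu.pow_eq_one]) ?_
  simp only [List.map, List.prod_cons, List.prod_nil, mul_one,
    Module.End.mul_apply, qCommutator_Ue2_Ue1 hq, qCommutator_Ue2_Ue3 hq, map_neg, map_smul,
    qCommutator_one_apply_eq_zero (commute_Ue2_Uz K q).symm, smul_zero, neg_zero]

end UqB2

theorem stmt2 (m : ℕ) (hm : 5 ≤ m) (hq : IsPrimitiveRoot q m)
    (l : ℕ) (hl : l = if Odd m then m else m / 2) :
    ∀ c ∈ ({Ue1 K q ^ l, Ue2 K q ^ l, Ue3 K q ^ l, Uz K q} : Set (UqB2 K q)),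
      ∀ g ∈ ({Ue1 K q, Ue2 K q, Ue3 K q, Uz K q} : Set (UqB2 K q)),
        Commute c g := by
  have hl3 : 3 ≤ l := by
    split_ifs at hl with hodd
    · omega
    · obtain ⟨k, rfl⟩ := Nat.not_odd_iff_even.1 hodd
      omega
  have hu : IsPrimitiveRoot (q ^ 2) l := isPrimitiveRoot_sq hq (by omega) hl
  have hq0 : q ≠ 0 := hq.ne_zero (by omega)
  intro c hc g hg
  simp only [Set.mem_insert_iff, Set.mem_singleton_iff] at hc hg
  rcases hc with rfl | rfl | rfl | rfl <;> rcases hg with rfl | rfl | rfl | rfl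
  · exact (Commute.refl _).pow_left l
  · exact (commute_Ue2_Ue1_pow hu hl3).symm
  · exact (commute_Ue3_Ue1_pow hq0 hu.pow_eq_one).symm
  · exact (commute_Ue1_Uz K q).pow_left l
  · exact (commute_Ue1_Ue2_pow hu hl3).symm
  · exact (Commute.refl _).pow_left l
  · exact (commute_Ue3_Ue2_pow hu (by omega)).symm
  · exact (commute_Ue2_Uz K q).pow_left l
  · exact (commute_Ue1_Ue3_pow hu.pow_eq_one).symm
  · exact (commute_Ue2_Ue3_pow hu (by omega)).symm
  · exact (Commute.refl _).pow_left l
  · exact (commute_Ue3_Uz K q).pow_left l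
  · exact (commute_Ue1_Uz K q).symm
  · exact (commute_Ue2_Uz K q).symm
  · exact (commute_Ue3_Uz K q).symm
  · exact Commute.refl _
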